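/- For a real number q with 0<q<1 and integers n ≥ l ≥ 1, ∑_{k=l}^n (q^k/[k]_q^2) · ([k choose l]_q / [k+l choose l]_q) = (q^l/[l]_q^2) · ([n choose l]_q / [n+l choose l]_q). -/

import Mathlib

open Finset

/-- q-analogue of a natural number: [m]_q = (1-q^m)/(1-q). -/
noncomputable def qnum (q : ℝ) (m : ℕ) : ℝ := (1 - q ^ m) / (1 - q)

/-- q-Pochhammer (q;q)_n = ∏_{k=0}^{n-1} (1 - q^{k+1}). -/
noncomputable def qPoch (q : ℝ) (n : ℕ) : ℝ := ∏ k ∈ Finset.range n, (1 - q ^ (k + 1))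

/-- Gaussian q-binomial coefficient, 0 when m > n. -/
noncomputable def qbinom (q : ℝ) (n m : ℕ) : ℝ :=
  if m ≤ n then qPoch q n / (qPoch q m * qPoch q (n - m)) else 0

/-- q-multiple harmonic star sum H_n^*[s₁,…,s_m]. -/
noncomputable def qHstar (q : ℝ) : List ℕ → ℕ → ℝ
  | [], _ => 1
  | s :: rest, n => ∑ k ∈ Finset.Icc 1 n, q ^ k / qnum q k ^ s * qHstar q rest k

/-- q-multiple zeta star value ζ_q^*[s₁,…,s_m]. -/
noncomputable def qZetaStar (q : ℝ) : List ℕ → ℝ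
  | [] => 1
  | s :: rest => ∑' k : ℕ, q ^ (k + 1) / qnum q (k + 1) ^ s * qHstar q rest (k + 1)

/-- strict multiple harmonic sum ∑_{n ≥ k₁ > … > k_r ≥ 1} ∏ 1/k_j^{p_j}. -/
noncomputable def Hstrict : List ℕ → ℕ → ℝ
  | [], _ => 1
  | p :: rest, n => ∑ k ∈ Finset.Icc 1 n, (1 : ℝ) / (k : ℝ) ^ p * Hstrict rest (k - 1)

/-- binomial-weighted strict multiple harmonic sum Ĥ_n(p). -/
noncomputable def Hhat : List ℕ → ℕ → ℝ
  | [], _ => 1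
  | p :: rest, n => ∑ k ∈ Finset.Icc 1 n,
      ((n.choose k : ℝ) / ((n + k).choose n)) * ((1 : ℝ) / (k : ℝ) ^ p) * Hstrict rest (k - 1)

/-- ordinary multiple harmonic star sum H_n^*(s₁,…,s_m). -/
noncomputable def HstarO : List ℕ → ℕ → ℝ
  | [], _ => 1
  | s :: rest, n => ∑ k ∈ Finset.Icc 1 n, (1 : ℝ) / (k : ℝ) ^ s * HstarO rest k

/-- ordinary multiple zeta star value. -/
noncomputable def zetaStarO : List ℕ → ℝ
  | [] => 1
  | s :: rest => ∑' k : ℕ, (1 : ℝ) / ((k : ℝ) + 1) ^ s * HstarO rest (k + 1)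

/-- Merge a list of parts according to a comma(true)/plus(false) pattern. -/
def mergeComp : ℕ → List ℕ → List Bool → List ℕ
  | a, [], _ => [a]
  | a, _ :: _, [] => [a]
  | a, b :: t, true :: bs => a :: mergeComp b t bs
  | a, b :: t, false :: bs => mergeComp (a + b) t bs


/-!
Writing `B n = [n choose l]_q / [n+l choose l]_q`, the identity is a telescoping sum. The ratio
satisfies `B (n+1) [n+1-l]_q [n+1+l]_q = B n [n+1]_q²`, and the q-analogue
`q^l [m+l]_q² - q^(m+l) [l]_q² = q^l [m]_q [m+2l]_q` of `(m+l)² - l² = m (m+2l)` shows that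
`q^l/[l]_q² · B n` increases by exactly the next summand from `n` to `n+1`.
-/

lemma qPoch_succ (q : ℝ) (m : ℕ) : qPoch q (m + 1) = qPoch q m * (1 - q ^ (m + 1)) :=
  Finset.prod_range_succ _ _

section

variable {q : ℝ}

lemma one_sub_pow_ne_zero (hq : |q| ≠ 1) {m : ℕ} (hm : m ≠ 0) : 1 - q ^ m ≠ 0 := fun h =>
  hq <| (abs_pow_eq_one q hm).mp (by rw [← sub_eq_zero.mp h, abs_one])

lemma qnum_ne_zero (hq : |q| ≠ 1) {m : ℕ} (hm : m ≠ 0) : qnum q m ≠ 0 :=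
  div_ne_zero (one_sub_pow_ne_zero hq hm) (by simpa using one_sub_pow_ne_zero hq one_ne_zero)

lemma qPoch_ne_zero (hq : |q| ≠ 1) (m : ℕ) : qPoch q m ≠ 0 :=
  Finset.prod_ne_zero_iff.mpr fun k _ => one_sub_pow_ne_zero hq k.succ_ne_zero

lemma qbinom_ne_zero (hq : |q| ≠ 1) {n m : ℕ} (h : m ≤ n) : qbinom q n m ≠ 0 := by
  rw [qbinom, if_pos h]
  exact div_ne_zero (qPoch_ne_zero hq n) (mul_ne_zero (qPoch_ne_zero hq m) (qPoch_ne_zero hq _))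

lemma qnum_sq_sub (hq : q ≠ 1) (m l : ℕ) :
    q ^ l * qnum q (m + l) ^ 2 - q ^ (m + l) * qnum q l ^ 2
      = q ^ l * (qnum q m * qnum q (m + l + l)) := by
  have h1q : 1 - q ≠ 0 := sub_ne_zero.mpr hq.symm
  simp only [qnum, pow_add]
  field_simp
  ring

lemma qbinom_succ_mul_qnum (hq : |q| ≠ 1) (m l : ℕ) :
    qbinom q (m + l + 1) l * qnum q (m + 1) = qbinom q (m + l) l * qnum q (m + l + 1) := by
  have h1q : 1 - q ≠ 0 := by simpa using one_sub_pow_ne_zero hq one_ne_zero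
  have hm := one_sub_pow_ne_zero (q := q) hq m.succ_ne_zero
  have hPl := qPoch_ne_zero hq l
  have hPm := qPoch_ne_zero hq m
  rw [qbinom, qbinom, if_pos (by omega), if_pos (by omega), show m + l + 1 - l = m + 1 by omega,
    Nat.add_sub_cancel, qPoch_succ q m, qPoch_succ q (m + l), qnum, qnum]
  field_simp

lemma qbinom_ratio_succ (hq : |q| ≠ 1) (m l : ℕ) :
    qbinom q (m + l + 1) l / qbinom q (m + l + 1 + l) l * (qnum q (m + 1) * qnum q (m + l + 1 + l))
      = qbinom q (m + l) l / qbinom q (m + l + l) l * qnum q (m + l + 1) ^ 2 := by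
  have hN : qnum q (m + l + 1) ≠ 0 := qnum_ne_zero hq (m + l).succ_ne_zero
  have hNl : qnum q (m + l + l + 1) ≠ 0 := qnum_ne_zero hq (m + l + l).succ_ne_zero
  have hlow := qbinom_succ_mul_qnum hq m l
  have hhigh := qbinom_succ_mul_qnum hq (m + l) l
  have hB := qbinom_ne_zero hq (by omega : l ≤ m + l + l)
  rw [show m + l + 1 + l = m + l + l + 1 by omega, eq_div_of_mul_eq hN hhigh]
  field_simp
  linear_combination hlow

end

theorem stmt3 (q : ℝ) (hq0 : 0 < q) (hq1 : q < 1) (n l : ℕ) (hl : 1 ≤ l) (hln : l ≤ n) :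
    ∑ k ∈ Finset.Icc l n, q ^ k / qnum q k ^ 2 * (qbinom q k l / qbinom q (k + l) l)
    = q ^ l / qnum q l ^ 2 * (qbinom q n l / qbinom q (n + l) l) := by
  have hq : |q| ≠ 1 := (abs_lt.mpr ⟨by linarith, hq1⟩).ne
  induction n, hln using Nat.le_induction with
  | base => simp
  | succ n hln ih =>
    obtain ⟨m, rfl⟩ := Nat.exists_eq_add_of_le' hln
    have hnum := qnum_sq_sub hq1.ne (m + 1) l
    have hratio := qbinom_ratio_succ hq m l
    have hL := qnum_ne_zero hq (by omega : l ≠ 0)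
    have hN : qnum q (m + l + 1) ≠ 0 := qnum_ne_zero hq (m + l).succ_ne_zero
    rw [Finset.sum_Icc_succ_top (by omega), ih]
    rw [show m + 1 + l = m + l + 1 by omega] at hnum
    set B₁ := qbinom q (m + l + 1) l / qbinom q (m + l + 1 + l) l
    field_simp
    linear_combination -q ^ l * hratio - B₁ * hnum
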